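/- Let A be an arena, w : E → ℤ a weight function, t ∈ ℕ, and let σ be a winning strategy for Player 0 in (A, AvgEnergy_L(w, t)). For every finite play prefix u that is consistent with σ and satisfies EL(u) > t, the set { EL(ux) : ux is a finite play prefix consistent with σ and EL(ux') > t for every prefix x' of x } is bounded above, i.e., Peak(u) := sup of this set is a natural number (finite). -/

import Mathlib

/-- An arena: a directed graph without terminal vertices, a set `V0` of Player 0's
vertices (Player 1 controls the complement), and an initial vertex. -/
structure Arena (V : Type) where
  V0 : Set V
  E : V → V → Prop
  vI : V
  succ : ∀ v, ∃ v', E v v'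

/-- A play: an infinite path starting in the initial vertex. -/
def Arena.Play {V : Type} (A : Arena V) (ρ : ℕ → V) : Prop :=
  ρ 0 = A.vI ∧ ∀ n, A.E (ρ n) (ρ (n + 1))

/-- The play prefix `ρ 0 ⋯ ρ n` as a list. -/
def prefixList {V : Type} (ρ : ℕ → V) (n : ℕ) : List V :=
  (List.range (n + 1)).map ρ

/-- A strategy for the player controlling the vertices in `p`. -/
def Arena.IsStrategy {V : Type} (A : Arena V) (p : Set V) (σ : List V → V) : Prop :=
  ∀ (h : List V) (v : V), v ∈ p → A.E v (σ (h ++ [v]))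

/-- Consistency of a play with a strategy of the player controlling `p`. -/
def Arena.ConsistentWith {V : Type} (A : Arena V) (p : Set V) (σ : List V → V) (ρ : ℕ → V) : Prop :=
  ∀ n, ρ n ∈ p → ρ (n + 1) = σ (prefixList ρ n)

/-- `σ` is a winning strategy for the player controlling `p` with objective `Obj`. -/
def Arena.WinningStrategy {V : Type} (A : Arena V) (p : Set V) (Obj : Set (ℕ → V))
    (σ : List V → V) : Prop :=
  A.IsStrategy p σ ∧ ∀ ρ, A.Play ρ → A.ConsistentWith p σ ρ → ρ ∈ Obj

/-- Player 0 wins the game `(A, Win)`. -/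
def Arena.Player0Wins {V : Type} (A : Arena V) (Win : Set (ℕ → V)) : Prop :=
  ∃ σ, A.WinningStrategy A.V0 Win σ

/-- `h` is a finite play prefix consistent with the strategy `σ` of the player controlling `p`. -/
def Arena.FinPrefix {V : Type} (A : Arena V) (p : Set V) (σ : List V → V) (h : List V) : Prop :=
  ∃ ρ n, A.Play ρ ∧ A.ConsistentWith p σ ρ ∧ h = prefixList ρ n

/-- A positional strategy only depends on the last vertex. -/
def Positional {X : Type} (σ : List X → X) : Prop :=
  ∀ (h : List X) (v : X), σ (h ++ [v]) = σ [v]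

/-- The energy level of the play prefix `ρ 0 ⋯ ρ n` is `EL w ρ n`:
the sum of the weights of its `n` edges. -/
def EL {V : Type} (w : V → V → ℤ) (ρ : ℕ → V) (n : ℕ) : ℤ :=
  ∑ i ∈ Finset.range n, w (ρ i) (ρ (i + 1))

/-- The energy level of a finite play prefix given as a list. -/
def ELl {V : Type} (w : V → V → ℤ) : List V → ℤ
  | [] => 0
  | [_] => 0
  | a :: b :: l => w a b + ELl w (b :: l)

/-- The average accumulated energy of the first `n` prefixes. -/
noncomputable def avgEL {V : Type} (w : V → V → ℤ) (ρ : ℕ → V) (n : ℕ) : ℝ :=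
  (∑ i ∈ Finset.range n, (EL w ρ i : ℝ)) / (n : ℝ)

/-- The lower-bounded energy objective. -/
def EnergyL {V : Type} (w : V → V → ℤ) : Set (ℕ → V) :=
  {ρ | ∀ n, 0 ≤ EL w ρ n}

/-- The lower- and upper-bounded energy objective. -/
def EnergyLU {V : Type} (w : V → V → ℤ) (cap : ℕ) : Set (ℕ → V) :=
  {ρ | ∀ n, 0 ≤ EL w ρ n ∧ EL w ρ n ≤ (cap : ℤ)}

/-- The average-energy objective: limsup of the averages is at most `t`. -/
def AvgE {V : Type} (w : V → V → ℤ) (t : ℝ) : Set (ℕ → V) :=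
  {ρ | Filter.limsup (fun n => (avgEL w ρ n : EReal)) Filter.atTop ≤ (t : EReal)}

/-- The lower-bounded average-energy objective. -/
def AvgEnergyL {V : Type} (w : V → V → ℤ) (t : ℝ) : Set (ℕ → V) :=
  EnergyL w ∩ AvgE w t

/-- The mean-payoff objective. -/
def MP {V : Type} (w : V → V → ℤ) (t : ℝ) : Set (ℕ → V) :=
  {ρ | Filter.limsup (fun n => (((EL w ρ n : ℝ) / (n : ℝ)) : EReal)) Filter.atTop ≤ (t : EReal)}

/-- A memory structure: initial memory state and update along edges. -/
structure Mem (V M : Type) where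
  mI : M
  upd : M → V → V → M

/-- Tracking the memory state along a play. -/
def Mem.track {V M : Type} (mem : Mem V M) (ρ : ℕ → V) : ℕ → M
  | 0 => mem.mI
  | n + 1 => mem.upd (Mem.track mem ρ n) (ρ n) (ρ (n + 1))

def Mem.runAux {V M : Type} (mem : Mem V M) : M → List V → M
  | m, [] => m
  | m, [_] => m
  | m, a :: b :: l => Mem.runAux mem (mem.upd m a b) (b :: l)

/-- `Upd⁺`: the memory state reached along a finite play prefix. -/
def Mem.run {V M : Type} (mem : Mem V M) (h : List V) : M :=
  Mem.runAux mem mem.mI h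

/-- The strategy `σ` is implemented by the memory structure `mem`
(via some next-move function). -/
def Arena.ImplementedBy {V M : Type} (A : Arena V) (mem : Mem V M) (σ : List V → V) : Prop :=
  ∃ nxt : V → M → V, ∀ (h : List V) (v : V), σ (h ++ [v]) = nxt v (mem.run (h ++ [v]))

/-- `σ` is a finite-state strategy of size `k`. -/
def Arena.FiniteStateOfSize {V : Type} (A : Arena V) (k : ℕ) (σ : List V → V) : Prop :=
  ∃ (M : Type) (inst : Fintype M) (mem : Mem V M),
    @Fintype.card M inst = k ∧ A.ImplementedBy mem σ

/-- The expanded arena `A × M`. -/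
def Arena.expand {V M : Type} (A : Arena V) (mem : Mem V M) : Arena (V × M) where
  V0 := {p | p.1 ∈ A.V0}
  E := fun p q => A.E p.1 q.1 ∧ q.2 = mem.upd p.2 p.1 q.1
  vI := (A.vI, mem.mI)
  succ := fun p => by
    obtain ⟨v', h⟩ := A.succ p.1
    exact ⟨(v', mem.upd p.2 p.1 v'), h, rfl⟩

/-- The extended play in `A × M` corresponding to a play in `A`. -/
def extendPlay {V M : Type} (mem : Mem V M) (ρ : ℕ → V) : ℕ → V × M :=
  fun n => (ρ n, Mem.track mem ρ n)

/-- `(A, Win) ≤_M (A × M, Win')`. -/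
def Reduces {V M : Type} (A : Arena V) (mem : Mem V M) (Win : Set (ℕ → V))
    (Win' : Set (ℕ → V × M)) : Prop :=
  ∀ ρ, A.Play ρ → (ρ ∈ Win ↔ extendPlay mem ρ ∈ Win')

/-- A recharge weight function (`none` is the recharge label `R`) assigns
non-positive weights to all (non-recharge) edges. -/
def RechargeWeights {V : Type} (A : Arena V) (w : V → V → Option ℤ) : Prop :=
  ∀ u v, A.E u v → ∀ k : ℤ, w u v = some k → k ≤ 0

/-- The recharge energy level of the prefix `ρ 0 ⋯ ρ n`: the capacity plus the
accumulated weight since the last `R`-edge. -/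
def ELcap {V : Type} (w : V → V → Option ℤ) (cap : ℕ) (ρ : ℕ → V) : ℕ → ℤ
  | 0 => (cap : ℤ)
  | n + 1 =>
    match w (ρ n) (ρ (n + 1)) with
    | none => (cap : ℤ)
    | some k => ELcap w cap ρ n + k

/-- The recharge objective. -/
def Recharge {V : Type} (w : V → V → Option ℤ) (cap : ℕ) : Set (ℕ → V) :=
  {ρ | ∀ n, 0 ≤ ELcap w cap ρ n}

/-- The average of the recharge energy levels of the first `n` prefixes. -/
noncomputable def avgELcap {V : Type} (w : V → V → Option ℤ) (cap : ℕ) (ρ : ℕ → V)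
    (n : ℕ) : ℝ :=
  (∑ i ∈ Finset.range n, (ELcap w cap ρ i : ℝ)) / (n : ℝ)

/-- The average-bounded recharge objective. -/
def AvgRecharge {V : Type} (w : V → V → Option ℤ) (cap : ℕ) (t : ℝ) : Set (ℕ → V) :=
  {ρ | Filter.limsup (fun n => (avgELcap w cap ρ n : EReal)) Filter.atTop ≤ (t : EReal)} ∩
    Recharge w cap

/-- The (max-)parity objective: the maximal color occurring infinitely often is even. -/
def ParityObj {V : Type} (Ω : V → ℕ) : Set (ℕ → V) :=
  {ρ | ∃ c, Even c ∧ {n | Ω (ρ n) = c}.Infinite ∧ ∀ d, {n | Ω (ρ n) = d}.Infinite → d ≤ c}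

/-! If infinitely many prolongations `x` of `u` stayed above `t`, they would form an infinite
prefix-closed set of words over the finite alphabet `V`, so Kőnig's lemma would give an infinite
branch. Appended to `u`, it is a play consistent with `σ` whose energy level is eventually at
least `t + 1`, so by Cesàro its average energy has limsup at least `t + 1`, contradicting that
`σ` wins. So there are only finitely many such prolongations. -/

open Filter Finset Topology

section PrefixList

variable {V : Type}

@[simp]
lemma prefixList_length (ρ : ℕ → V) (n : ℕ) : (prefixList ρ n).length = n + 1 := by
  simp [prefixList]

lemma prefixList_ne_nil (ρ : ℕ → V) (n : ℕ) : prefixList ρ n ≠ [] :=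
  List.ne_nil_of_length_pos (by simp)

lemma prefixList_succ (ρ : ℕ → V) (n : ℕ) :
    prefixList ρ (n + 1) = prefixList ρ n ++ [ρ (n + 1)] := by
  simp [prefixList, List.range_succ]

lemma prefixList_succ_eq_cons (ρ : ℕ → V) (n : ℕ) :
    prefixList ρ (n + 1) = ρ 0 :: prefixList (fun k => ρ (k + 1)) n := by
  simp [prefixList, List.range_succ_eq_map]

lemma prefixList_eq_prefixList_iff {ρ ρ' : ℕ → V} {n : ℕ} :
    prefixList ρ n = prefixList ρ' n ↔ ∀ k ≤ n, ρ k = ρ' k := by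
  simp [prefixList, List.map_inj_left]

lemma prefixList_prefix_of_le (ρ : ℕ → V) {m n : ℕ} (h : m ≤ n) :
    prefixList ρ m <+: prefixList ρ n := by
  rw [List.prefix_iff_eq_take]
  simp [prefixList, ← List.map_take, List.take_range, h]

lemma prefixList_ite_add (ρ c : ℕ → V) (N n : ℕ) :
    prefixList (fun k => if k ≤ N then ρ k else c (k - (N + 1))) (N + n) =
      prefixList ρ N ++ (List.range n).map c := by
  induction n with
  | zero =>
    simpa using prefixList_eq_prefixList_iff.2 fun k hk => if_pos hk
  | succ n ih =>
    rw [← add_assoc, prefixList_succ, ih, List.range_succ, List.map_append, List.append_assoc,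
      if_neg (by omega), show N + n + 1 - (N + 1) = n by omega]
    rfl

lemma ELl_prefixList (w : V → V → ℤ) (ρ : ℕ → V) (n : ℕ) :
    ELl w (prefixList ρ n) = EL w ρ n := by
  induction n generalizing ρ with
  | zero => simp [prefixList, ELl, EL]
  | succ n ih =>
    obtain ⟨tl, htl⟩ : ∃ tl, prefixList (fun k => ρ (k + 1)) n = ρ 1 :: tl := by
      cases n with
      | zero => exact ⟨[], rfl⟩
      | succ n => exact ⟨_, prefixList_succ_eq_cons _ n⟩
    rw [prefixList_succ_eq_cons, htl, ELl, ← htl, ih, EL, EL, Finset.sum_range_succ']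
    ring

end PrefixList

namespace Arena

variable {V : Type} {A : Arena V} {p : Set V} {σ : List V → V}

lemma FinPrefix.of_prefix {h h' : List V} (hp : A.FinPrefix p σ h) (hpre : h' <+: h)
    (hne : h' ≠ []) : A.FinPrefix p σ h' := by
  obtain ⟨ρ, n, hplay, hcons, rfl⟩ := hp
  obtain ⟨k, hk⟩ : ∃ k, h'.length = k + 1 :=
    Nat.exists_eq_succ_of_ne_zero (List.length_pos_iff.2 hne).ne'
  have hkn : k ≤ n := by simpa [hk] using hpre.length_le
  refine ⟨ρ, k, hplay, hcons, ?_⟩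
  exact (List.prefix_of_prefix_length_le hpre (prefixList_prefix_of_le ρ hkn) (by simp [hk])
    ).eq_of_length (by simp [hk])

lemma FinPrefix.exists_play_of_prefixList {ρ : ℕ → V} {n : ℕ}
    (hp : A.FinPrefix p σ (prefixList ρ n)) :
    ∃ ρ', A.Play ρ' ∧ A.ConsistentWith p σ ρ' ∧ ∀ k ≤ n, ρ k = ρ' k := by
  obtain ⟨ρ', m, hplay, hcons, h⟩ := hp
  obtain rfl : m = n := by simpa using (congrArg List.length h).symm
  exact ⟨ρ', hplay, hcons, prefixList_eq_prefixList_iff.1 h⟩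

lemma play_and_consistentWith_of_forall_finPrefix {ρ : ℕ → V}
    (h : ∀ n, A.FinPrefix p σ (prefixList ρ n)) : A.Play ρ ∧ A.ConsistentWith p σ ρ := by
  choose ρ' hplay hcons hagree using fun n => (h (n + 1)).exists_play_of_prefixList
  refine ⟨⟨?_, fun n => ?_⟩, fun n hn => ?_⟩
  · rw [hagree 0 0 (by omega), (hplay 0).1]
  · rw [hagree n n (by omega), hagree n (n + 1) le_rfl]
    exact (hplay n).2 n
  · have hpre : prefixList ρ n = prefixList (ρ' n) n :=
      prefixList_eq_prefixList_iff.2 fun k hk => hagree n k (by omega)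
    rw [hagree n (n + 1) le_rfl, hcons n n (by rwa [← hagree n n (by omega)]), hpre]

end Arena

lemma le_limsup_cesaro_of_eventually_le {a : ℕ → ℝ} {b : ℝ} (h : ∀ᶠ n in atTop, b ≤ a n) :
    (b : EReal) ≤ limsup (fun n => (((∑ i ∈ range n, a i) / n : ℝ) : EReal)) atTop := by
  -- Truncating `a` at `b` gives a sequence below `a` that converges to `b`.
  have hmin : Tendsto (fun n => min (a n) b) atTop (𝓝 b) :=
    tendsto_const_nhds.congr' (h.mono fun n hn => (min_eq_right hn).symm)
  rw [← ((continuous_coe_real_ereal.tendsto b).comp hmin.cesaro).limsup_eq]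
  refine limsup_le_limsup (Eventually.of_forall fun n => EReal.coe_le_coe_iff.2 ?_)
  rw [div_eq_inv_mul]
  exact mul_le_mul_of_nonneg_left (sum_le_sum fun i _ => min_le_left _ _) (by positivity)

lemma notMem_avgE_of_eventually_le {V : Type} {w : V → V → ℤ} {ρ : ℕ → V} {b t : ℝ}
    (ht : t < b) (h : ∀ᶠ n in atTop, b ≤ EL w ρ n) : ρ ∉ AvgE w t := fun hρ =>
  ht.not_ge (EReal.coe_le_coe_iff.1 ((le_limsup_cesaro_of_eventually_le h).trans hρ))

section Konig

variable {V : Type} [Finite V]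

lemma exists_infinite_prefix_append_singleton {T : Set (List V)} {l : List V}
    (h : {x ∈ T | l <+: x}.Infinite) : ∃ v, {x ∈ T | l ++ [v] <+: x}.Infinite := by
  by_contra! hfin
  refine h (((Set.finite_singleton l).union (Set.finite_iUnion hfin)).subset ?_)
  rintro x ⟨hxT, r, rfl⟩
  cases r with
  | nil => exact Or.inl (List.append_nil l)
  | cons v r => exact Or.inr (Set.mem_iUnion.2 ⟨v, hxT, r, by simp⟩)

lemma exists_forall_map_range_mem {T : Set (List V)} (hT : T.Infinite)
    (hpre : ∀ x ∈ T, ∀ y, y <+: x → y ∈ T) : ∃ c : ℕ → V, ∀ n, (List.range n).map c ∈ T := by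
  let P : List V → Prop := fun l => {x ∈ T | l <+: x}.Infinite
  choose next hnext using fun l (hl : P l) => exists_infinite_prefix_append_singleton hl
  let g : ℕ → {l // P l} := fun n =>
    Nat.rec ⟨[], by simpa [P] using hT⟩ (fun _ l => ⟨l.1 ++ [next l.1 l.2], hnext _ l.2⟩) n
  let c : ℕ → V := fun n => next (g n).1 (g n).2
  have hg : ∀ n, (g n).1 = (List.range n).map c := by
    intro n
    induction n with
    | zero => rfl
    | succ n ih => simp only [List.range_succ, List.map_append, ← ih]; rfl
  refine ⟨c, fun n => ?_⟩
  obtain ⟨x, hxT, hx⟩ := (g n).2.nonempty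
  exact hpre x hxT _ (hg n ▸ hx)

end Konig

theorem peak_bddAbove_general {V : Type} [Fintype V] (A : Arena V)
    (w : V → V → ℤ) (t : ℕ) (σ : List V → V)
    (hσ : A.WinningStrategy A.V0 (AvgEnergyL w (t : ℝ)) σ)
    (u : List V) (hu : A.FinPrefix A.V0 σ u) :
    BddAbove {e : ℤ | ∃ x : List V, A.FinPrefix A.V0 σ (u ++ x) ∧
      (∀ x' : List V, x' <+: x → (t : ℤ) < ELl w (u ++ x')) ∧ e = ELl w (u ++ x)} := by
  obtain ⟨ρ₀, N, -, -, rfl⟩ := hu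
  set X : Set (List V) := {x | A.FinPrefix A.V0 σ (prefixList ρ₀ N ++ x) ∧
    ∀ x' : List V, x' <+: x → (t : ℤ) < ELl w (prefixList ρ₀ N ++ x')}
  have hX : ∀ x ∈ X, ∀ y, y <+: x → y ∈ X := fun x ⟨hfp, hx⟩ y hyx =>
    ⟨hfp.of_prefix ((List.prefix_append_right_inj _).2 hyx) (by simp [prefixList_ne_nil]),
      fun x' hx' => hx x' (hx'.trans hyx)⟩
  suffices hfin : X.Finite by
    refine (hfin.image fun x => ELl w (prefixList ρ₀ N ++ x)).bddAbove.mono ?_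
    rintro e ⟨x, hfp, hx, rfl⟩
    exact ⟨x, ⟨hfp, hx⟩, rfl⟩
  by_contra hinf
  obtain ⟨c, hc⟩ := exists_forall_map_range_mem hinf hX
  set ρ : ℕ → V := fun k => if k ≤ N then ρ₀ k else c (k - (N + 1))
  have hρ : ∀ n, prefixList ρ (N + n) = prefixList ρ₀ N ++ (List.range n).map c :=
    prefixList_ite_add ρ₀ c N
  obtain ⟨hplay, hcons⟩ := Arena.play_and_consistentWith_of_forall_finPrefix fun n =>
    ((hρ n).symm ▸ (hc n).1 : A.FinPrefix A.V0 σ (prefixList ρ (N + n))).of_prefix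
      (prefixList_prefix_of_le ρ (Nat.le_add_left n N)) (prefixList_ne_nil ρ n)
  refine notMem_avgE_of_eventually_le (lt_add_one (t : ℝ)) ?_ (hσ.2 ρ hplay hcons).2
  filter_upwards [eventually_ge_atTop N] with n hn
  obtain ⟨k, rfl⟩ := Nat.exists_eq_add_of_le hn
  have hk := (hc k).2 _ (List.prefix_refl _)
  rw [← hρ, ELl_prefixList] at hk
  exact_mod_cast hk

/-- For every finite play prefix `u` consistent with a winning
strategy `σ` for `(A, AvgEnergy_L(w,t))` with `EL(u) > t`, the set of energy levels of
consistent prolongations of `u` that stay strictly above `t` is bounded above,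
i.e., `Peak(u)` is finite. -/
theorem peak_bddAbove {V : Type} [Fintype V] (A : Arena V)
    (w : V → V → ℤ) (t : ℕ) (σ : List V → V)
    (hσ : A.WinningStrategy A.V0 (AvgEnergyL w (t : ℝ)) σ)
    (u : List V) (hu : A.FinPrefix A.V0 σ u) (hel : (t : ℤ) < ELl w u) :
    BddAbove {e : ℤ | ∃ x : List V, A.FinPrefix A.V0 σ (u ++ x) ∧
      (∀ x' : List V, x' <+: x → (t : ℤ) < ELl w (u ++ x')) ∧ e = ELl w (u ++ x)} :=
  peak_bddAbove_general A w t σ hσ u hu
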